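/- Let A be a Krull-Schmidt category and B ⊆ A a full additive subcategory closed under retracts. If x, y ∈ A are indecomposable objects not in B that become isomorphic in the additive quotient A/B, then x ≅ y already in A. -/

import Mathlib

open CategoryTheory CategoryTheory.Limits ZeroObject

namespace Stmt7

variable {A : Type*} [Category A] [Preadditive A] [HasZeroObject A]
  [HasBinaryBiproducts A] [HasFiniteBiproducts A]

/-- A morphism factors through an object belonging to the class `B`. -/
def FactorsThru (B : Set A) {x y : A} (f : x ⟶ y) : Prop :=
  ∃ (b : A) (g : x ⟶ b) (h : b ⟶ y), b ∈ B ∧ g ≫ h = f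

theorem factorsThru_add {B : Set A}
    (hB : ∀ {b b' : A}, b ∈ B → b' ∈ B → (b ⊞ b') ∈ B)
    {x y : A} {f g : x ⟶ y} (hf : FactorsThru B f) (hg : FactorsThru B g) :
    FactorsThru B (f + g) := by
  obtain ⟨b, p, q, hb, hpq⟩ := hf
  obtain ⟨b', p', q', hb', hpq'⟩ := hg
  exact ⟨b ⊞ b', biprod.lift p p', biprod.desc q q', hB hb hb', by
    rw [biprod.lift_desc, hpq, hpq']⟩

/-- A (nonempty) full additive subcategory of `A`, given by its class of objects,
closed under finite direct sums. -/
structure AdditiveSubcat (A : Type*) [Category A] [Preadditive A]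
    [HasBinaryBiproducts A] where
  carrier : Set A
  nonempty : carrier.Nonempty
  biprod_mem : ∀ {b b' : A}, b ∈ carrier → b' ∈ carrier → (b ⊞ b') ∈ carrier

variable (S : AdditiveSubcat A)

/-- The hom relation defining the additive quotient `A/B`: two morphisms are
identified when their difference factors through an object of `B`. -/
def AdditiveSubcat.rel (S : AdditiveSubcat A) : HomRel A :=
  fun _ _ f g => FactorsThru S.carrier (f - g)

instance : Congruence S.rel where
  equivalence := by
    refine ⟨fun f => ?_, fun {f g} h => ?_, fun {f g h} h1 h2 => ?_⟩
    · obtain ⟨b, hb⟩ := S.nonempty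
      exact ⟨b, 0, 0, hb, by simp⟩
    · obtain ⟨b, p, q, hb, hpq⟩ := h
      exact ⟨b, -p, q, hb, by rw [Preadditive.neg_comp, hpq, neg_sub]⟩
    · have := factorsThru_add S.biprod_mem h1 h2
      rwa [sub_add_sub_cancel] at this
  comp_left := by
    rintro X Y Z f g g' ⟨b, p, q, hb, hpq⟩
    exact ⟨b, f ≫ p, q, hb, by rw [Category.assoc, hpq, Preadditive.comp_sub]⟩
  comp_right := by
    rintro X Y Z f f' g ⟨b, p, q, hb, hpq⟩
    exact ⟨b, p, q ≫ g, hb, by rw [← Category.assoc, hpq, Preadditive.sub_comp]⟩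

/-- The additive quotient category `A/B` is preadditive. -/
instance : Preadditive (CategoryTheory.Quotient S.rel) :=
  CategoryTheory.Quotient.preadditive S.rel (by
    intro X Y f₁ f₂ g₁ g₂ h1 h2
    have := factorsThru_add S.biprod_mem h1 h2
    rwa [show (f₁ - f₂) + (g₁ - g₂) = (f₁ + g₁) - (f₂ + g₂) by abel] at this)

/-- An additive category is Krull-Schmidt if every object is a finite direct sum of
objects with local endomorphism rings. -/
def KrullSchmidt (A : Type*) [Category A] [Preadditive A] [HasFiniteBiproducts A] : Prop :=
  ∀ x : A, ∃ (n : ℕ) (f : Fin n → A),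
    (∀ i, IsLocalRing (End (f i))) ∧ Nonempty (x ≅ ⨁ f)


/-- An object is indecomposable: nonzero and admitting no nontrivial direct sum
decomposition. -/
def Indec (x : A) : Prop :=
  ¬ IsZero x ∧ ∀ y z : A, Nonempty (x ≅ y ⊞ z) → IsZero y ∨ IsZero z

/-- An object of the additive quotient `A/B` is indecomposable: nonzero and admitting
no nontrivial direct sum decomposition (direct sums in the quotient being the images of
the direct sums of `A` under the quotient functor, which is additive, full and
essentially surjective). -/
def IndecQ (S : AdditiveSubcat A) (q : CategoryTheory.Quotient S.rel) : Prop :=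
  ¬ IsZero q ∧ ∀ y z : A,
    Nonempty (q ≅ (CategoryTheory.Quotient.functor S.rel).obj (y ⊞ z)) →
      IsZero ((CategoryTheory.Quotient.functor S.rel).obj y) ∨
        IsZero ((CategoryTheory.Quotient.functor S.rel).obj z)

/-- Conjugation ring equivalence of endomorphism rings along an iso. -/
def endRingEquiv {x y : A} (e : x ≅ y) : End x ≃+* End y where
  toFun a := e.inv ≫ a ≫ e.hom
  invFun b := e.hom ≫ b ≫ e.inv
  left_inv a := by simp [End.mul_def]
  right_inv b := by simp [End.mul_def]
  map_add' a b := by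
    change e.inv ≫ ((a : x ⟶ x) + b) ≫ e.hom = e.inv ≫ a ≫ e.hom + e.inv ≫ b ≫ e.hom
    rw [Preadditive.add_comp, Preadditive.comp_add]
  map_mul' a b := by simp [End.mul_def]

lemma isLocalRing_of_iso {x y : A} (e : x ≅ y) (h : IsLocalRing (End x)) :
    IsLocalRing (End y) := by
  haveI := h
  obtain ⟨a, b, hab⟩ := exists_pair_ne (End x)
  haveI : Nontrivial (End y) :=
    ⟨endRingEquiv e a, endRingEquiv e b, fun hc => hab ((endRingEquiv e).injective hc)⟩
  refine ⟨fun {a b} hab => ?_⟩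
  have hab' : (endRingEquiv e).symm a + (endRingEquiv e).symm b = 1 := by
    rw [← map_add, hab, map_one]
  rcases h.isUnit_or_isUnit_of_add_one hab' with hu | hu
  · left; simpa using hu.map (endRingEquiv e)
  · right; simpa using hu.map (endRingEquiv e)

/-- Splitting off the first summand of a biproduct over `Fin (n+1)`. -/
noncomputable def finSuccSplit {n : ℕ} (f : Fin (n + 1) → A) :
    (⨁ f) ≅ f 0 ⊞ ⨁ (fun i : Fin n => f i.succ) where
  hom := biprod.lift (biproduct.π f 0) (biproduct.lift fun i => biproduct.π f i.succ)
  inv := biprod.desc (biproduct.ι f 0) (biproduct.desc fun i => biproduct.ι f i.succ)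
  hom_inv_id := by
    rw [biprod.lift_desc, biproduct.lift_desc, ← biproduct.total, Fin.sum_univ_succ]
  inv_hom_id := by
    ext
    all_goals simp [biproduct.ι_π, biproduct.ι_π_assoc, Fin.succ_ne_zero,
      fun j : Fin n => (Fin.succ_ne_zero j).symm, (Fin.succ_injective n).eq_iff]


lemma isZero_biproduct_zero (f : Fin 0 → A) : IsZero (⨁ f) := by
  rw [IsZero.iff_id_eq_zero, ← biproduct.total]
  simp

lemma end_local_of_indec :
    ∀ (n : ℕ) (x : A), Indec x → ∀ f : Fin n → A,
      (∀ i, IsLocalRing (End (f i))) → (x ≅ ⨁ f) → IsLocalRing (End x) := by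
  intro n
  induction n with
  | zero =>
    intro x hx f _ e
    exact absurd ((isZero_biproduct_zero f).of_iso e) hx.1
  | succ n ih =>
    intro x hx f hloc e
    have e2 : x ≅ f 0 ⊞ ⨁ (fun i : Fin n => f i.succ) := e ≪≫ finSuccSplit f
    rcases hx.2 _ _ ⟨e2⟩ with hz | hz
    · have e3 : x ≅ ⨁ (fun i : Fin n => f i.succ) :=
        e2 ≪≫ (isoZeroBiprod hz).symm
      exact ih x hx _ (fun i => hloc i.succ) e3
    · have e3 : x ≅ f 0 := e2 ≪≫ (isoBiprodZero hz).symm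
      exact isLocalRing_of_iso e3.symm (hloc 0)

lemma isIso_of_isUnit {x : A} {e : x ⟶ x} (h : IsUnit (show End x from e)) : IsIso e := by
  obtain ⟨u, rfl⟩ := h
  exact ⟨u.inv, u.inv_mul, u.mul_inv⟩

lemma end_local_of_KS (hKS : KrullSchmidt A) {x : A} (hx : Indec x) :
    IsLocalRing (End x) := by
  obtain ⟨n, f, hloc, ⟨e⟩⟩ := hKS x
  exact end_local_of_indec n x hx f hloc e

/-- If two indecomposable objects of a Krull-Schmidt category `A`, neither of which
lies in the retract-closed full additive subcategory `B`, become isomorphic in the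
additive quotient `A/B`, then they are already isomorphic in `A`. -/
theorem iso_of_iso_in_quotient (hKS : KrullSchmidt A)
    (hretract : ∀ {b c : A}, b ∈ S.carrier →
      ∀ (s : c ⟶ b) (r : b ⟶ c), s ≫ r = 𝟙 c → c ∈ S.carrier)
    (x y : A) (hx : Indec x) (hy : Indec y)
    (hxB : x ∉ S.carrier) (hyB : y ∉ S.carrier)
    (hiso : Nonempty ((CategoryTheory.Quotient.functor S.rel).obj x ≅
      (CategoryTheory.Quotient.functor S.rel).obj y)) :
    Nonempty (x ≅ y) := by
  obtain ⟨i⟩ := hiso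
  obtain ⟨f, hf⟩ := (CategoryTheory.Quotient.functor S.rel).map_surjective i.hom
  obtain ⟨g, hg⟩ := (CategoryTheory.Quotient.functor S.rel).map_surjective i.inv
  have hrel : S.rel (f ≫ g) (𝟙 x) := by
    rw [← Quotient.functor_map_eq_iff S.rel]
    rw [Functor.map_comp, hf, hg, i.hom_inv_id, CategoryTheory.Functor.map_id]
  obtain ⟨b, p, q, hb, hpq⟩ := hrel
  have hlx : IsLocalRing (End x) := end_local_of_KS hKS hx
  have hly : IsLocalRing (End y) := end_local_of_KS hKS hy
  have hsum : (show End x from f ≫ g) + (show End x from 𝟙 x - f ≫ g) = 1 := by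
    show f ≫ g + (𝟙 x - f ≫ g) = 𝟙 x
    abel
  rcases hlx.isUnit_or_isUnit_of_add_one hsum with hu | hu
  · -- `f ≫ g` is an isomorphism
    haveI : IsIso (f ≫ g) := isIso_of_isUnit hu
    obtain ⟨r, hfr⟩ : ∃ r : y ⟶ x, f ≫ r = 𝟙 x :=
      ⟨g ≫ inv (f ≫ g), by rw [← Category.assoc, IsIso.hom_inv_id]⟩
    have hidem : r ≫ f ≫ r ≫ f = r ≫ f := by
      rw [← Category.assoc f r f, hfr, Category.id_comp]
    have hsum2 : (show End y from r ≫ f) + (show End y from 𝟙 y - r ≫ f) = 1 := by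
      show r ≫ f + (𝟙 y - r ≫ f) = 𝟙 y
      abel
    rcases hly.isUnit_or_isUnit_of_add_one hsum2 with hv | hv
    · -- the idempotent is a unit, hence equal to `1`
      have hee1 : (show End y from r ≫ f) = 1 := by
        obtain ⟨u, hu'⟩ := hv
        have hmul : (show End y from r ≫ f) * (show End y from r ≫ f)
            = (show End y from r ≫ f) := by
          show (r ≫ f) ≫ (r ≫ f) = r ≫ f
          rw [Category.assoc]; exact hidem
        have h1 : (show End y from r ≫ f) * ((show End y from r ≫ f) * ↑u⁻¹)
            = (show End y from r ≫ f) * ↑u⁻¹ := by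
          rw [← mul_assoc, hmul]
        have h3 : (show End y from r ≫ f) * ↑u⁻¹ = 1 := by
          rw [← hu', Units.mul_inv]
        rw [h3, mul_one] at h1
        exact h1
      exact ⟨⟨f, r, hfr, hee1⟩⟩
    · -- `1 - r ≫ f` is a unit, hence `1`, so `r ≫ f = 0` and `x` is zero
      exfalso
      have hidem' : (show End y from 𝟙 y - r ≫ f) * (show End y from 𝟙 y - r ≫ f)
          = (show End y from 𝟙 y - r ≫ f) := by
        show (𝟙 y - r ≫ f) ≫ (𝟙 y - r ≫ f) = 𝟙 y - r ≫ f
        simp only [Preadditive.sub_comp, Preadditive.comp_sub, Category.id_comp,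
          Category.comp_id, Category.assoc, hidem]
        abel
      have hee0 : r ≫ f = 0 := by
        obtain ⟨u, hu'⟩ := hv
        have h1 : (show End y from 𝟙 y - r ≫ f) * ((show End y from 𝟙 y - r ≫ f) * ↑u⁻¹)
            = (show End y from 𝟙 y - r ≫ f) * ↑u⁻¹ := by
          rw [← mul_assoc, hidem']
        have h3 : (show End y from 𝟙 y - r ≫ f) * ↑u⁻¹ = 1 := by
          rw [← hu', Units.mul_inv]
        rw [h3, mul_one] at h1
        have h4 : (𝟙 y - r ≫ f : y ⟶ y) = 𝟙 y := h1
        exact sub_eq_self.mp h4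
      apply hx.1
      rw [IsZero.iff_id_eq_zero]
      calc 𝟙 x = (f ≫ r) ≫ (f ≫ r) := by rw [hfr]; simp
        _ = f ≫ (r ≫ f) ≫ r := by simp
        _ = 0 := by rw [hee0]; simp
  · -- `𝟙 x - f ≫ g` is an isomorphism, so `x` is a retract of `b ∈ B`
    exfalso
    haveI : IsIso (𝟙 x - f ≫ g) := isIso_of_isUnit hu
    have hw : (-p) ≫ q = 𝟙 x - f ≫ g := by
      rw [Preadditive.neg_comp, hpq]
      abel
    have hret : (-p) ≫ (q ≫ inv (𝟙 x - f ≫ g)) = 𝟙 x := by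
      rw [← Category.assoc, hw, IsIso.hom_inv_id]
    exact hxB (hretract hb (-p) (q ≫ inv (𝟙 x - f ≫ g)) hret)

end Stmt7
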